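/- Taking cumulative column sums and recording, for each k, the set of column positions of the k ones in row k of the cumulative sum matrix, gives a bijection between n×n alternating sign matrices and complete monotone triangles of order n. -/

import Mathlib

open Finset

/-- An alternating sign matrix: entries in `{-1,0,1}`, all row and column sums `1`,
and in each row and column the nonzero entries alternate in sign (equivalently,
all partial row and column sums lie in `{0,1}`). -/
def IsASM (n : ℕ) (A : Matrix (Fin n) (Fin n) ℤ) : Prop :=
  (∀ i j, A i j = -1 ∨ A i j = 0 ∨ A i j = 1) ∧
  (∀ i, ∑ j, A i j = 1) ∧
  (∀ j, ∑ i, A i j = 1) ∧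
  (∀ i k, (∑ j ∈ univ.filter (· ≤ k), A i j) = 0 ∨ (∑ j ∈ univ.filter (· ≤ k), A i j) = 1) ∧
  (∀ j k, (∑ i ∈ univ.filter (· ≤ k), A i j) = 0 ∨ (∑ i ∈ univ.filter (· ≤ k), A i j) = 1)

/-- Cumulative column sums: the `(k,j)` entry is `∑_{i ≤ k} A i j`. -/
def colPartial (n : ℕ) (A : Matrix (Fin n) (Fin n) ℤ) (k j : Fin n) : ℤ :=
  ∑ i ∈ univ.filter (· ≤ k), A i j

/-- A triangular array with `n` rows, row `k` (0-indexed) having `k+1` integer entries. -/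
def CMTri (n : ℕ) := ∀ k : Fin n, Fin (k.val + 1) → ℤ

/-- A complete monotone triangle of order `n`: rows strictly increasing, bottom row
`(1,2,...,n)`, and each non-bottom entry weakly between its two lower neighbours. -/
def IsCMT (n : ℕ) (t : CMTri n) : Prop :=
  (∀ k, StrictMono (t k)) ∧
  (∀ (hn : 0 < n) (i : Fin n),
      t ⟨n - 1, by omega⟩ ⟨i.val, by have := i.isLt; simp only [Fin.val_mk]; omega⟩ = (i.val : ℤ) + 1) ∧
  (∀ (k : Fin n) (h : k.val + 1 < n) (i : Fin (k.val + 1)),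
      t ⟨k.val + 1, h⟩ ⟨i.val, by have := i.isLt; simp only [Fin.val_mk]; omega⟩ ≤ t k i ∧
      t k i ≤ t ⟨k.val + 1, h⟩ ⟨i.val + 1, by have := i.isLt; simp only [Fin.val_mk]; omega⟩)

/-- The triangle `t` records, in each row `k`, the positions of the ones in row `k`
of the cumulative column sum matrix of `A`. -/
def Corresponds (n : ℕ) (A : Matrix (Fin n) (Fin n) ℤ) (t : CMTri n) : Prop :=
  ∀ k : Fin n,
    (univ : Finset (Fin (k.val + 1))).image (t k) =
      (univ.filter fun j : Fin n => colPartial n A k j = 1).image (fun j => (j.val : ℤ) + 1)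

/-!
Row `k` of the cumulative column sum matrix of an alternating sign matrix is a `0/1` vector with
`k + 1` ones, and since the partial sums of each row of the matrix are `0` or `1`, the sets of
positions of these ones in consecutive rows interlace: for every `x`, the number of them up to
`x` grows by `0` or `1` from one row to the next. Conversely, such an interlacing chain of sets
gives back the matrix by taking differences of consecutive rows. Listing each set in increasing
order turns this counting form of interlacing into the entrywise interlacing
`bᵢ ≤ aᵢ ≤ bᵢ₊₁` of consecutive rows of a monotone triangle, and the last set of the chain, having
`n` elements, is everything, which is the bottom row `(1, …, n)`. So both sides are in bijection
with interlacing chains.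
-/

section Interlacing

variable {α : Type*} [LinearOrder α]

def Interlaces {m : ℕ} (a : Fin (m + 1) → α) (b : Fin (m + 2) → α) : Prop :=
  ∀ i, b i.castSucc ≤ a i ∧ a i ≤ b i.succ

def CountsInterlace (s t : Finset α) : Prop :=
  ∀ x, #{y ∈ s | y ≤ x} ≤ #{y ∈ t | y ≤ x} ∧ #{y ∈ t | y ≤ x} ≤ #{y ∈ s | y ≤ x} + 1

lemma Interlaces.comp {β : Type*} [LinearOrder β] {m : ℕ} {a : Fin (m + 1) → α}
    {b : Fin (m + 2) → α} (h : Interlaces a b) {f : α → β} (hf : Monotone f) :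
    Interlaces (f ∘ a) (f ∘ b) :=
  fun i => ⟨hf (h i).1, hf (h i).2⟩

lemma StrictMono.le_iff_lt_card_filter {m : ℕ} {f : Fin m → α} (hf : StrictMono f) (x : α)
    (i : Fin m) : f i ≤ x ↔ i.val < #{j | f j ≤ x} := by
  constructor
  · intro hi
    have : Iic i ⊆ ({j | f j ≤ x} : Finset (Fin m)) := fun j hj =>
      mem_filter.2 ⟨mem_univ _, (hf.monotone (mem_Iic.1 hj)).trans hi⟩
    simpa using card_le_card this
  · intro hi
    by_contra! hx
    have : ({j | f j ≤ x} : Finset (Fin m)) ⊆ Iio i := fun j hj =>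
      mem_Iio.2 (hf.lt_iff_lt.1 ((mem_filter.1 hj).2.trans_lt hx))
    simpa using hi.trans_le (card_le_card this)

lemma card_filter_image_univ_le {m : ℕ} {f : Fin m → α} (hf : StrictMono f) (x : α) :
    #{y ∈ univ.image f | y ≤ x} = #{i | f i ≤ x} := by
  rw [filter_image, card_image_of_injective _ hf.injective]

lemma card_filter_image_le_apply {β : Type*} [LinearOrder β] {f : β → α} (hf : StrictMono f)
    (s : Finset β) (x : β) : #{y ∈ s.image f | y ≤ f x} = #{y ∈ s | y ≤ x} := by
  rw [filter_image, card_image_of_injective _ hf.injective]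
  simp only [hf.le_iff_le]

lemma CountsInterlace.of_image {β : Type*} [LinearOrder β] {f : β → α} (hf : StrictMono f)
    {s t : Finset β} (h : CountsInterlace (s.image f) (t.image f)) : CountsInterlace s t := by
  intro x
  simpa only [card_filter_image_le_apply hf] using h (f x)

theorem interlaces_iff_countsInterlace {m : ℕ} {a : Fin (m + 1) → α} {b : Fin (m + 2) → α}
    (ha : StrictMono a) (hb : StrictMono b) :
    Interlaces a b ↔ CountsInterlace (univ.image a) (univ.image b) := by
  simp only [CountsInterlace, card_filter_image_univ_le ha, card_filter_image_univ_le hb]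
  have hca : ∀ x, #{i | a i ≤ x} ≤ m + 1 := fun x => (card_filter_le _ _).trans_eq (card_fin _)
  have hcb : ∀ x, #{i | b i ≤ x} ≤ m + 2 := fun x => (card_filter_le _ _).trans_eq (card_fin _)
  constructor
  · intro h x
    constructor
    · by_contra! hlt
      let i : Fin (m + 1) := ⟨#{i | b i ≤ x}, by have := hca x; omega⟩
      have hax : a i ≤ x := (ha.le_iff_lt_card_filter x i).2 hlt
      exact lt_irrefl _ ((hb.le_iff_lt_card_filter x i.castSucc).1 ((h i).1.trans hax))
    · by_contra! hlt
      let i : Fin (m + 1) := ⟨#{i | a i ≤ x}, by have := hcb x; omega⟩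
      have hbx : b i.succ ≤ x := (hb.le_iff_lt_card_filter x i.succ).2 (by simp [i]; omega)
      exact lt_irrefl _ ((ha.le_iff_lt_card_filter x i).1 ((h i).2.trans hbx))
  · intro h i
    constructor
    · rw [hb.le_iff_lt_card_filter]
      exact ((ha.le_iff_lt_card_filter _ i).1 le_rfl).trans_le (h (a i)).1
    · rw [ha.le_iff_lt_card_filter]
      have hi := (hb.le_iff_lt_card_filter _ i.succ).1 le_rfl
      have := (h (b i.succ)).2
      simp only [Fin.val_succ] at hi
      omega

end Interlacing

section CumulativeSums

variable {n : ℕ}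

lemma colPartial_zero (A : Matrix (Fin n) (Fin n) ℤ) (h : 0 < n) (j : Fin n) :
    colPartial n A ⟨0, h⟩ j = A ⟨0, h⟩ j := by
  have : (univ.filter (· ≤ (⟨0, h⟩ : Fin n))) = {⟨0, h⟩} := by
    ext i
    simp [Fin.le_def, Fin.ext_iff]
  rw [colPartial, this, sum_singleton]

lemma colPartial_succ (A : Matrix (Fin n) (Fin n) ℤ) (k : ℕ) (h : k + 1 < n) (j : Fin n) :
    colPartial n A ⟨k + 1, h⟩ j = colPartial n A ⟨k, by omega⟩ j + A ⟨k + 1, h⟩ j := by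
  have : (univ.filter (· ≤ (⟨k + 1, h⟩ : Fin n))) =
      insert ⟨k + 1, h⟩ (univ.filter (· ≤ (⟨k, by omega⟩ : Fin n))) := by
    ext i
    simp only [mem_filter, mem_univ, true_and, mem_insert, Fin.le_def, Fin.ext_iff]
    omega
  rw [colPartial, colPartial, this, sum_insert (by simp [Fin.le_def]), add_comm]

lemma colPartial_last (A : Matrix (Fin n) (Fin n) ℤ) (h : 0 < n) (j : Fin n) :
    colPartial n A ⟨n - 1, by omega⟩ j = ∑ i, A i j := by
  rw [colPartial, filter_true_of_mem fun i _ => Fin.le_def.2 (by simp; omega)]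

lemma sum_colPartial (A : Matrix (Fin n) (Fin n) ℤ) (k : Fin n) :
    ∑ j, colPartial n A k j = ∑ i ∈ univ.filter (· ≤ k), ∑ j, A i j :=
  sum_comm

lemma card_filter_le_fin (k : Fin n) : #{i | i ≤ k} = k.val + 1 := by
  rw [← Fin.card_Iic]
  congr 1
  ext
  simp

def rowDiff (C : Fin n → Fin n → ℤ) : Matrix (Fin n) (Fin n) ℤ
  | ⟨0, h⟩, j => C ⟨0, h⟩ j
  | ⟨k + 1, h⟩, j => C ⟨k + 1, h⟩ j - C ⟨k, by omega⟩ j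

@[simp]
lemma rowDiff_zero (C : Fin n → Fin n → ℤ) (h : 0 < n) (j : Fin n) :
    rowDiff C ⟨0, h⟩ j = C ⟨0, h⟩ j :=
  rfl

@[simp]
lemma rowDiff_succ (C : Fin n → Fin n → ℤ) (k : ℕ) (h : k + 1 < n) (j : Fin n) :
    rowDiff C ⟨k + 1, h⟩ j = C ⟨k + 1, h⟩ j - C ⟨k, by omega⟩ j :=
  rfl

lemma colPartial_rowDiff (C : Fin n → Fin n → ℤ) : colPartial n (rowDiff C) = C := by
  funext ⟨k, hk⟩ j
  induction k with
  | zero => exact colPartial_zero _ hk j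
  | succ k ih => rw [colPartial_succ, ih, rowDiff_succ, add_sub_cancel]

lemma rowDiff_colPartial (A : Matrix (Fin n) (Fin n) ℤ) : rowDiff (colPartial n A) = A := by
  funext ⟨k, hk⟩ j
  cases k with
  | zero => exact colPartial_zero _ hk j
  | succ k => rw [rowDiff_succ, colPartial_succ, add_sub_cancel_left]

end CumulativeSums

section InterlacingChains

variable {n : ℕ}

structure IsInterlacingChain (S : Fin n → Finset (Fin n)) : Prop where
  card_eq : ∀ k, #(S k) = k.val + 1
  countsInterlace : ∀ (k : Fin n) (h : k.val + 1 < n), CountsInterlace (S k) (S ⟨k.val + 1, h⟩)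

def onesSet (A : Matrix (Fin n) (Fin n) ℤ) (k : Fin n) : Finset (Fin n) :=
  {j | colPartial n A k j = 1}

def indicatorMatrix (S : Fin n → Finset (Fin n)) : Fin n → Fin n → ℤ :=
  fun k j => if j ∈ S k then 1 else 0

lemma sum_indicatorMatrix (S : Fin n → Finset (Fin n)) (k : Fin n) :
    ∑ j, indicatorMatrix S k j = #(S k) := by
  simp [indicatorMatrix]

lemma sum_filter_le_indicatorMatrix (S : Fin n → Finset (Fin n)) (k x : Fin n) :
    ∑ j ∈ univ.filter (· ≤ x), indicatorMatrix S k j = #{j ∈ S k | j ≤ x} := by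
  simp only [indicatorMatrix, sum_boole, filter_filter, Nat.cast_inj]
  congr 1
  ext j
  simp [and_comm]

lemma IsASM.colPartial_eq {A : Matrix (Fin n) (Fin n) ℤ} (hA : IsASM n A) :
    colPartial n A = indicatorMatrix (onesSet A) := by
  funext k j
  have h : colPartial n A k j = 0 ∨ colPartial n A k j = 1 := hA.2.2.2.2 j k
  rcases h with h | h <;> simp [indicatorMatrix, onesSet, h]

lemma IsASM.isInterlacingChain_onesSet {A : Matrix (Fin n) (Fin n) ℤ} (hA : IsASM n A) :
    IsInterlacingChain (onesSet A) := by
  have hC := hA.colPartial_eq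
  constructor
  · intro k
    have := sum_indicatorMatrix (onesSet A) k
    rw [← hC, sum_colPartial, sum_congr rfl fun i _ => hA.2.1 i] at this
    simp only [sum_const, card_filter_le_fin, nsmul_eq_mul, mul_one] at this
    exact_mod_cast this.symm
  · rintro ⟨k, hk⟩ h x
    dsimp only at h ⊢
    have hrow := hA.2.2.2.1 ⟨k + 1, h⟩ x
    have hsum : ∑ j ∈ univ.filter (· ≤ x), colPartial n A ⟨k + 1, h⟩ j =
        ∑ j ∈ univ.filter (· ≤ x), colPartial n A ⟨k, hk⟩ j +
          ∑ j ∈ univ.filter (· ≤ x), A ⟨k + 1, h⟩ j := by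
      rw [← sum_add_distrib]
      exact sum_congr rfl fun j _ => colPartial_succ A k h j
    rw [hC, sum_filter_le_indicatorMatrix, sum_filter_le_indicatorMatrix] at hsum
    omega

lemma IsInterlacingChain.isASM_rowDiff {S : Fin n → Finset (Fin n)}
    (hS : IsInterlacingChain S) : IsASM n (rowDiff (indicatorMatrix S)) := by
  have hC := colPartial_rowDiff (indicatorMatrix S)
  refine ⟨?_, ?_, ?_, ?_, ?_⟩
  · rintro ⟨_ | k, hk⟩ j <;> simp only [rowDiff_zero, rowDiff_succ, indicatorMatrix] <;>
      split_ifs <;> norm_num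
  · rintro ⟨_ | k, hk⟩
    · simp [sum_indicatorMatrix, hS.card_eq]
    · simp [sum_sub_distrib, sum_indicatorMatrix, hS.card_eq]
  · intro j
    have hn : 0 < n := j.pos
    have hlast : S ⟨n - 1, by omega⟩ = univ := eq_univ_of_card _ (by simp [hS.card_eq]; omega)
    rw [← colPartial_last _ hn, hC]
    simp [indicatorMatrix, hlast]
  · rintro ⟨_ | k, hk⟩ x
    · have : #{j ∈ S ⟨0, hk⟩ | j ≤ x} ≤ 1 := (card_filter_le _ _).trans_eq (hS.card_eq _)
      simp only [rowDiff_zero, sum_filter_le_indicatorMatrix]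
      omega
    · have := hS.countsInterlace ⟨k, by omega⟩ hk x
      dsimp only at this
      simp only [rowDiff_succ, sum_sub_distrib, sum_filter_le_indicatorMatrix]
      omega
  · intro j k
    rw [← colPartial, hC]
    simp only [indicatorMatrix]
    split_ifs <;> simp

lemma onesSet_rowDiff_indicatorMatrix (S : Fin n → Finset (Fin n)) :
    onesSet (rowDiff (indicatorMatrix S)) = S := by
  funext k
  ext j
  simp [onesSet, colPartial_rowDiff, indicatorMatrix]

def asmEquivInterlacingChain :
    {A : Matrix (Fin n) (Fin n) ℤ // IsASM n A} ≃
      {S : Fin n → Finset (Fin n) // IsInterlacingChain S} where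
  toFun A := ⟨onesSet A.1, A.2.isInterlacingChain_onesSet⟩
  invFun S := ⟨rowDiff (indicatorMatrix S.1), S.2.isASM_rowDiff⟩
  left_inv A := Subtype.ext <| by
    simp only [← A.2.colPartial_eq, rowDiff_colPartial]
  right_inv S := Subtype.ext (onesSet_rowDiff_indicatorMatrix S.1)

end InterlacingChains

section MonotoneTriangles

variable {n : ℕ}

lemma strictMono_val_add_one : StrictMono fun j : Fin n => (j.val : ℤ) + 1 :=
  fun _ _ h => by simpa using h

lemma IsCMT.interlaces {t : CMTri n} (hT : IsCMT n t) (k : Fin n) (h : k.val + 1 < n) :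
    Interlaces (t k) (t ⟨k.val + 1, h⟩) :=
  hT.2.2 k h

lemma IsCMT.one_le_and_le {t : CMTri n} (hT : IsCMT n t) (k : Fin n) (i : Fin (k.val + 1)) :
    1 ≤ t k i ∧ t k i ≤ n := by
  obtain ⟨k, hk⟩ := k
  induction hd : n - 1 - k generalizing k with
  | zero =>
    obtain rfl : k = n - 1 := by omega
    have := hT.2.1 (by omega) ⟨i.val, by omega⟩
    dsimp only at this
    rw [this]
    omega
  | succ d ih =>
    have h : k + 1 < n := by omega
    have hl := (ih (k + 1) h i.castSucc (by omega)).1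
    have hr := (ih (k + 1) h i.succ (by omega)).2
    have := hT.interlaces ⟨k, hk⟩ h i
    exact ⟨hl.trans this.1, this.2.trans hr⟩

def rowSet (t : CMTri n) (k : Fin n) : Finset (Fin n) :=
  {j | (j.val : ℤ) + 1 ∈ univ.image (t k)}

lemma IsCMT.image_rowSet {t : CMTri n} (hT : IsCMT n t) (k : Fin n) :
    (rowSet t k).image (fun j => (j.val : ℤ) + 1) = univ.image (t k) := by
  ext v
  simp only [rowSet, mem_image, mem_filter, mem_univ, true_and]
  constructor
  · rintro ⟨j, hj, rfl⟩
    exact hj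
  · rintro ⟨i, rfl⟩
    obtain ⟨h1, h2⟩ := hT.one_le_and_le k i
    exact ⟨⟨(t k i - 1).toNat, by omega⟩, ⟨i, by simp; omega⟩, by simp; omega⟩

lemma IsCMT.isInterlacingChain_rowSet {t : CMTri n} (hT : IsCMT n t) :
    IsInterlacingChain (rowSet t) := by
  constructor
  · intro k
    rw [← card_image_of_injective _ strictMono_val_add_one.injective, hT.image_rowSet,
      card_image_of_injective _ (hT.1 k).injective, card_univ, Fintype.card_fin]
  · intro k h
    have := (interlaces_iff_countsInterlace (hT.1 k) (hT.1 _)).1 (hT.interlaces k h)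
    rw [← hT.image_rowSet, ← hT.image_rowSet] at this
    exact this.of_image strictMono_val_add_one

def triangleOf (S : Fin n → Finset (Fin n)) (hS : ∀ k, #(S k) = k.val + 1) : CMTri n :=
  fun k i => ((S k).orderEmbOfFin (hS k) i : ℤ) + 1

lemma strictMono_triangleOf (S : Fin n → Finset (Fin n)) (hS : ∀ k, #(S k) = k.val + 1)
    (k : Fin n) : StrictMono (triangleOf S hS k) :=
  strictMono_val_add_one.comp (orderEmbOfFin _ _).strictMono

lemma image_triangleOf (S : Fin n → Finset (Fin n)) (hS : ∀ k, #(S k) = k.val + 1)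
    (k : Fin n) :
    univ.image (triangleOf S hS k) = (S k).image (fun j => (j.val : ℤ) + 1) := by
  conv_rhs => rw [← image_orderEmbOfFin_univ (S k) (hS k), image_image]
  rfl

lemma IsInterlacingChain.isCMT_triangleOf {S : Fin n → Finset (Fin n)}
    (hS : IsInterlacingChain S) : IsCMT n (triangleOf S hS.card_eq) := by
  refine ⟨strictMono_triangleOf S hS.card_eq, ?_, ?_⟩
  · intro hn i
    have hlast : S ⟨n - 1, by omega⟩ = univ :=
      eq_univ_of_card _ (by rw [hS.card_eq, Fintype.card_fin, Fin.val_mk]; omega)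
    have := orderEmbOfFin_unique (hS.card_eq ⟨n - 1, by omega⟩)
      (f := fun j => Fin.cast (Nat.sub_add_cancel hn) j) (fun _ => hlast ▸ mem_univ _)
      fun _ _ h => h
    simp [triangleOf, ← this]
  · intro k h
    have hab := (interlaces_iff_countsInterlace ((S k).orderEmbOfFin (hS.card_eq k)).strictMono
      ((S _).orderEmbOfFin (hS.card_eq ⟨k.val + 1, h⟩)).strictMono).2
      (by simpa only [image_orderEmbOfFin_univ] using hS.countsInterlace k h)
    exact hab.comp strictMono_val_add_one.monotone

lemma rowSet_triangleOf (S : Fin n → Finset (Fin n)) (hS : ∀ k, #(S k) = k.val + 1) :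
    rowSet (triangleOf S hS) = S := by
  funext k
  ext j
  simp [rowSet, image_triangleOf, strictMono_val_add_one.injective.mem_finset_image]

lemma IsCMT.triangleOf_rowSet {t : CMTri n} (hT : IsCMT n t) :
    triangleOf (rowSet t) hT.isInterlacingChain_rowSet.card_eq = t := by
  funext k
  rw [← (strictMono_triangleOf _ _ k).range_inj (hT.1 k),
    ← Set.image_univ, ← Set.image_univ, ← coe_univ, ← coe_image, ← coe_image, coe_inj]
  exact (image_triangleOf _ _ k).trans (hT.image_rowSet k)

def interlacingChainEquivCMT :
    {S : Fin n → Finset (Fin n) // IsInterlacingChain S} ≃ {t : CMTri n // IsCMT n t} where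
  toFun S := ⟨triangleOf S.1 S.2.card_eq, S.2.isCMT_triangleOf⟩
  invFun t := ⟨rowSet t.1, t.2.isInterlacingChain_rowSet⟩
  left_inv S := Subtype.ext (rowSet_triangleOf S.1 S.2.card_eq)
  right_inv t := Subtype.ext t.2.triangleOf_rowSet

end MonotoneTriangles

theorem stmt2 (n : ℕ) :
    ∃ e : {A : Matrix (Fin n) (Fin n) ℤ // IsASM n A} ≃ {t : CMTri n // IsCMT n t},
      ∀ A : {A : Matrix (Fin n) (Fin n) ℤ // IsASM n A}, Corresponds n A.val (e A).val :=
  ⟨asmEquivInterlacingChain.trans interlacingChainEquivCMT, fun _ k => image_triangleOf _ _ k⟩
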